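/- Cumulative suboptimality of hybrid actor-critic under NPG coverage (deterministic form of the no-Bellman-completeness case of Theorem 4.5): Let |A| = A ≥ 2, T ≥ 4·log(A), and η = (1−γ)·√(log(A)/T). Let f^1, …, f^T : S×A → [0, 1/(1−γ)], and let the policies π^1, …, π^T be generated by π^1(·|s) uniform on A and π^{t+1}(a|s) = π^t(a|s)·exp(η f^t(s,a)) / Σ_{a'} π^t(a'|s)·exp(η f^t(s,a')). Suppose for every t: E_{d^{π^t}}[(f^t − Q^{π^t})²] ≤ Δ_on, and the comparator policy π^e satisfies d^{π^e}(s,a) ≤ C·d^{π^t}(s,a) for all (s,a), with C ≥ 0. Then Σ_{t=1}^T (V^{π^e} − V^{π^t}) ≤ (2/(1−γ)²)·√(log(A)·T) + (2·T/(1−γ))·√(C·Δ_on). -/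

import Mathlib

/-!
By the performance difference lemma, `(1 - γ) (V^{πe} - V^{πₜ})` is the expectation over
`s ∼ d^{πe}` of `⟨πe(s) - πₜ(s), Q^{πₜ}(s)⟩`. Replacing `Q^{πₜ}` by the critic `fₜ` costs the two
error terms `E_{(s,a) ∼ d^{πe}}[Q^{πₜ} - fₜ]` and `E_{s ∼ d^{πe}, a ∼ πₜ(s)}[fₜ - Q^{πₜ}]`.
Coverage bounds both weighting measures by `C · d^{πₜ}` (the second one through the state
marginals), so by Cauchy–Schwarz each error is at most `√(C Δ_on)`. What is left is, state by
state, the regret of exponential weights against `πe(s)` on gains `fₜ(s, ·) ∈ [0, 1/(1-γ)]`. The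
potential `log ∑ₐ exp (η ∑_{u ≤ n} f_u(s, a))` starts at `log A`, grows by at most
`η ⟨π_{n+1}(s), f_{n+1}(s)⟩ + (η/(1-γ))²` per round since `eˣ ≤ 1 + x + x²` for `|x| ≤ 1`, and
ends above `η ∑ₜ ⟨πe(s), fₜ(s)⟩`; so the regret is at most `log A / η + η T / (1-γ)²`, and the
choice of `η` balances the two terms.
-/

open Finset

structure FinMDP (S A : Type*) [Fintype S] [Fintype A] where
  P : S → A → S → ℝ
  P_nonneg : ∀ s a s', 0 ≤ P s a s'
  P_sum : ∀ s a, ∑ s', P s a s' = 1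
  r : S → A → ℝ
  r_nonneg : ∀ s a, 0 ≤ r s a
  r_le_one : ∀ s a, r s a ≤ 1
  disc : ℝ
  disc_pos : 0 < disc
  disc_lt_one : disc < 1
  init : S → ℝ
  init_nonneg : ∀ s, 0 ≤ init s
  init_sum : ∑ s, init s = 1

variable {S A : Type*} [Fintype S] [Fintype A] [Nonempty S] [Nonempty A]

/-- A policy assigns to each state a probability mass function over actions. -/
def IsPolicy (π : S → A → ℝ) : Prop :=
  (∀ s a, 0 ≤ π s a) ∧ ∀ s, ∑ a, π s a = 1

/-- The Bellman operator `T^π`. -/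
noncomputable def FinMDP.bellman (M : FinMDP S A) (π f : S → A → ℝ) (s : S) (a : A) : ℝ :=
  M.r s a + M.disc * ∑ s', M.P s a s' * ∑ a', π s' a' * f s' a'

/-- `Q` is the action-value function of `π`, i.e. satisfies the Bellman equation. -/
def FinMDP.IsQ (M : FinMDP S A) (π Q : S → A → ℝ) : Prop :=
  ∀ s a, Q s a = M.bellman π Q s a

/-- The state value `V^π(s)` induced by a `Q`-function. -/
noncomputable def vOf (π Q : S → A → ℝ) (s : S) : ℝ := ∑ a, π s a * Q s a

/-- The scalar value `V^π = E_{s ∼ μ₀}[V^π(s)]`. -/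
noncomputable def FinMDP.scalarV (M : FinMDP S A) (π Q : S → A → ℝ) : ℝ :=
  ∑ s, M.init s * vOf π Q s

/-- Distribution of the state at time `t` under policy `π`. -/
noncomputable def FinMDP.stateDist (M : FinMDP S A) (π : S → A → ℝ) : ℕ → S → ℝ
  | 0 => M.init
  | (t + 1) => fun s' => ∑ s, ∑ a, FinMDP.stateDist M π t s * π s a * M.P s a s'

/-- The discounted occupancy measure `d^π(s,a) = (1-γ) ∑_t γ^t Pr^π(s_t = s, a_t = a)`. -/
noncomputable def FinMDP.occ (M : FinMDP S A) (π : S → A → ℝ) (s : S) (a : A) : ℝ :=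
  (1 - M.disc) * ∑' t : ℕ, M.disc ^ t * M.stateDist π t s * π s a

theorem sum_mul_le_sqrt_of_le_mul {ι : Type*} (s : Finset ι) {w μ h : ι → ℝ} {C D : ℝ}
    (hC : 0 ≤ C) (hw : ∀ i ∈ s, 0 ≤ w i) (hw1 : ∑ i ∈ s, w i ≤ 1)
    (hwμ : ∀ i ∈ s, w i ≤ C * μ i) (hD : ∑ i ∈ s, μ i * h i ^ 2 ≤ D) :
    ∑ i ∈ s, w i * h i ≤ √(C * D) := by
  have hwh : ∀ i ∈ s, 0 ≤ w i * h i ^ 2 := fun i hi => mul_nonneg (hw i hi) (sq_nonneg _)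
  refine Real.le_sqrt_of_sq_le ?_
  calc (∑ i ∈ s, w i * h i) ^ 2 ≤ (∑ i ∈ s, w i) * ∑ i ∈ s, w i * h i ^ 2 :=
        sum_sq_le_sum_mul_sum_of_sq_le_mul s hw hwh fun i _ => le_of_eq (by ring)
    _ ≤ 1 * ∑ i ∈ s, C * μ i * h i ^ 2 :=
        mul_le_mul hw1 (sum_le_sum fun i hi => mul_le_mul_of_nonneg_right (hwμ i hi) (sq_nonneg _))
          (sum_nonneg hwh) zero_le_one
    _ ≤ C * D := by simp only [one_mul, mul_assoc, ← mul_sum]; gcongr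

section ExpWeights

open Real

theorem log_sum_mul_exp_le {ι : Type*} [Fintype ι] {p x : ι → ℝ} {c : ℝ}
    (hp : ∀ i, 0 ≤ p i) (hp1 : ∑ i, p i = 1) (hx : ∀ i, |x i| ≤ c) (hc : c ≤ 1) :
    log (∑ i, p i * exp (x i)) ≤ ∑ i, p i * x i + c ^ 2 := by
  have hexp : ∀ i, exp (x i) ≤ 1 + x i + c ^ 2 := fun i => by
    have hquad := (abs_le.1 (abs_exp_sub_one_sub_id_le ((hx i).trans hc))).2
    have hsq : x i ^ 2 ≤ c ^ 2 := sq_le_sq' (abs_le.1 (hx i)).1 (abs_le.1 (hx i)).2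
    linarith
  have hpos : 0 < ∑ i, p i * exp (x i) := by
    obtain ⟨i, -, hi⟩ := (sum_pos_iff_of_nonneg fun i _ => hp i).1 (hp1 ▸ one_pos)
    exact (sum_pos_iff_of_nonneg fun j _ => mul_nonneg (hp j) (exp_pos _).le).2
      ⟨i, mem_univ i, mul_pos hi (exp_pos _)⟩
  calc log (∑ i, p i * exp (x i)) ≤ ∑ i, p i * exp (x i) - 1 := log_le_sub_one_of_pos hpos
    _ ≤ ∑ i, p i * (1 + x i + c ^ 2) - 1 := by gcongr with i; exacts [hp i, hexp i]
    _ = ∑ i, p i * x i + c ^ 2 := by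
        simp only [mul_add, mul_one, sum_add_distrib, ← sum_mul, hp1]; ring

variable {ι : Type*}

noncomputable def expWeight (η : ℝ) (g : ℕ → ι → ℝ) (n : ℕ) (i : ι) : ℝ :=
  exp (η * ∑ u ∈ Icc 1 n, g u i)

theorem expWeight_succ (η : ℝ) (g : ℕ → ι → ℝ) (n : ℕ) (i : ι) :
    expWeight η g (n + 1) i = expWeight η g n i * exp (η * g (n + 1) i) := by
  rw [expWeight, expWeight, sum_Icc_succ_top (by omega), mul_add, exp_add]

variable [Fintype ι]

noncomputable def expWeightSum (η : ℝ) (g : ℕ → ι → ℝ) (n : ℕ) : ℝ :=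
  ∑ i, expWeight η g n i

def IsExpWeights (η : ℝ) (g : ℕ → ι → ℝ) (T : ℕ) (p : ℕ → ι → ℝ) : Prop :=
  (∀ i, p 1 i = 1 / Fintype.card ι) ∧
    ∀ t, 1 ≤ t → t < T → ∀ i,
      p (t + 1) i = p t i * exp (η * g t i) / ∑ j, p t j * exp (η * g t j)

variable [Nonempty ι] {η : ℝ} {g p : ℕ → ι → ℝ} {T : ℕ}

theorem expWeightSum_pos (n : ℕ) : 0 < expWeightSum η g n :=
  sum_pos (fun _ _ => exp_pos _) univ_nonempty

theorem IsExpWeights.eq_expWeight_div (hp : IsExpWeights η g T p) :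
    ∀ n < T, ∀ i, p (n + 1) i = expWeight η g n i / expWeightSum η g n := by
  intro n
  induction n with
  | zero => intro _ i; simp [hp.1, expWeightSum, expWeight]
  | succ n ih =>
    intro hn i
    have hnum : ∀ j, p (n + 1) j * exp (η * g (n + 1) j)
        = expWeight η g (n + 1) j / expWeightSum η g n := fun j => by
      rw [ih (by omega), expWeight_succ, div_mul_eq_mul_div]
    rw [hp.2 (n + 1) (by omega) hn, hnum, sum_congr rfl fun j _ => hnum j, ← sum_div]
    exact div_div_div_cancel_right₀ (expWeightSum_pos n).ne' _ _

theorem IsExpWeights.isProb (hp : IsExpWeights η g T p) {t : ℕ} (ht : t ∈ Icc 1 T) :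
    (∀ i, 0 ≤ p t i) ∧ ∑ i, p t i = 1 := by
  obtain ⟨n, rfl⟩ : ∃ n, t = n + 1 := ⟨t - 1, by grind⟩
  have hn : n < T := by grind
  simp only [hp.eq_expWeight_div n hn, ← sum_div]
  exact ⟨fun i => div_nonneg (exp_pos _).le (expWeightSum_pos n).le,
    div_self (expWeightSum_pos n).ne'⟩

theorem IsExpWeights.expWeightSum_succ (hp : IsExpWeights η g T p) {n : ℕ} (hn : n < T) :
    expWeightSum η g (n + 1) = expWeightSum η g n * ∑ i, p (n + 1) i * exp (η * g (n + 1) i) := by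
  simp only [hp.eq_expWeight_div n hn, div_mul_eq_mul_div, ← sum_div,
    mul_div_cancel₀ _ (expWeightSum_pos n).ne']
  simp only [expWeightSum, expWeight_succ]

theorem IsExpWeights.log_expWeightSum_le (hp : IsExpWeights η g T p) {B : ℝ} (hη : 0 ≤ η)
    (hηB : η * B ≤ 1) (hg : ∀ t ∈ Icc 1 T, ∀ i, |g t i| ≤ B) :
    ∀ n ≤ T, log (expWeightSum η g n)
      ≤ log (Fintype.card ι) + η * ∑ t ∈ Icc 1 n, ∑ i, p t i * g t i + n * (η * B) ^ 2 := by
  intro n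
  induction n with
  | zero => intro _; simp [expWeightSum, expWeight]
  | succ n ih =>
    intro hn
    have hmem : n + 1 ∈ Icc 1 T := mem_Icc.2 ⟨by omega, hn⟩
    obtain ⟨hp0, hp1⟩ := hp.isProb hmem
    have hstep : log (∑ i, p (n + 1) i * exp (η * g (n + 1) i))
        ≤ η * ∑ i, p (n + 1) i * g (n + 1) i + (η * B) ^ 2 := by
      have := log_sum_mul_exp_le (x := fun i => η * g (n + 1) i) hp0 hp1 (fun i => ?_) hηB
      · simpa only [mul_left_comm _ η, ← mul_sum] using this
      rw [abs_mul, abs_of_nonneg hη]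
      exact mul_le_mul_of_nonneg_left (hg _ hmem i) hη
    have hpos : 0 < ∑ i, p (n + 1) i * exp (η * g (n + 1) i) := by
      have := hp.expWeightSum_succ (by omega : n < T) ▸ expWeightSum_pos (n + 1)
      exact pos_of_mul_pos_right this (expWeightSum_pos n).le
    rw [hp.expWeightSum_succ (by omega), log_mul (expWeightSum_pos n).ne' hpos.ne',
      sum_Icc_succ_top (by omega), mul_add]
    push_cast
    linarith [ih (by omega)]

theorem le_log_expWeightSum {q : ι → ℝ} (hq : ∀ i, 0 ≤ q i) (hq1 : ∑ i, q i = 1) (n : ℕ) :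
    η * ∑ i, q i * ∑ u ∈ Icc 1 n, g u i ≤ log (expWeightSum η g n) := by
  have hle : ∀ i, η * ∑ u ∈ Icc 1 n, g u i ≤ log (expWeightSum η g n) := fun i => by
    rw [le_log_iff_exp_le (expWeightSum_pos n)]
    exact single_le_sum (f := expWeight η g n) (fun j _ => (exp_pos _).le) (mem_univ i)
  calc η * ∑ i, q i * ∑ u ∈ Icc 1 n, g u i = ∑ i, q i * (η * ∑ u ∈ Icc 1 n, g u i) := by
        rw [mul_sum]; exact sum_congr rfl fun i _ => by ring
    _ ≤ ∑ i, q i * log (expWeightSum η g n) := by gcongr with i; exacts [hq i, hle i]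
    _ = log (expWeightSum η g n) := by rw [← sum_mul, hq1, one_mul]

theorem IsExpWeights.regret_le (hp : IsExpWeights η g T p) {B : ℝ} (hη : 0 < η)
    (hηB : η * B ≤ 1) (hg : ∀ t ∈ Icc 1 T, ∀ i, |g t i| ≤ B)
    {q : ι → ℝ} (hq : ∀ i, 0 ≤ q i) (hq1 : ∑ i, q i = 1) :
    ∑ t ∈ Icc 1 T, ∑ i, (q i - p t i) * g t i ≤ log (Fintype.card ι) / η + η * T * B ^ 2 := by
  have hupper := hp.log_expWeightSum_le hη.le hηB hg T le_rfl
  have hlower := le_log_expWeightSum (η := η) (g := g) hq hq1 T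
  have hsplit : ∑ t ∈ Icc 1 T, ∑ i, (q i - p t i) * g t i
      = ∑ i, q i * ∑ u ∈ Icc 1 T, g u i - ∑ t ∈ Icc 1 T, ∑ i, p t i * g t i := by
    simp only [sub_mul, sum_sub_distrib, mul_sum]
    rw [sum_comm]
  rw [hsplit, div_add' _ _ _ hη.ne', le_div_iff₀ hη]
  linarith

end ExpWeights

namespace FinMDP

variable {S A : Type*} [Fintype S] [Fintype A] (M : FinMDP S A) {π ρ : S → A → ℝ} {C : ℝ}

theorem stateDist_nonneg (hπ : ∀ s a, 0 ≤ π s a) (t : ℕ) (s : S) : 0 ≤ M.stateDist π t s := by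
  induction t generalizing s with
  | zero => exact M.init_nonneg s
  | succ t ih =>
    exact sum_nonneg fun s' _ => sum_nonneg fun a _ =>
      mul_nonneg (mul_nonneg (ih s') (hπ s' a)) (M.P_nonneg s' a s)

theorem sum_stateDist (hπ : IsPolicy π) (t : ℕ) : ∑ s, M.stateDist π t s = 1 := by
  induction t with
  | zero => exact M.init_sum
  | succ t ih =>
    calc ∑ s', M.stateDist π (t + 1) s'
        = ∑ s, ∑ a, M.stateDist π t s * π s a * ∑ s', M.P s a s' := by
          simp only [stateDist, mul_sum]
          rw [sum_comm]
          exact sum_congr rfl fun s _ => sum_comm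
      _ = 1 := by simp only [M.P_sum, mul_one, ← mul_sum, hπ.2, ih]

theorem summable_disc_pow_mul_stateDist (hπ : IsPolicy π) (s : S) :
    Summable fun t => M.disc ^ t * M.stateDist π t s := by
  refine (summable_geometric_of_lt_one M.disc_pos.le M.disc_lt_one).of_nonneg_of_le
    (fun t => mul_nonneg (pow_nonneg M.disc_pos.le t) (M.stateDist_nonneg hπ.1 t s)) fun t => ?_
  refine mul_le_of_le_one_right (pow_nonneg M.disc_pos.le t) ?_
  exact M.sum_stateDist hπ t ▸ single_le_sum (fun s _ => M.stateDist_nonneg hπ.1 t s) (mem_univ s)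

noncomputable def stateOcc (π : S → A → ℝ) (s : S) : ℝ :=
  (1 - M.disc) * ∑' t : ℕ, M.disc ^ t * M.stateDist π t s

theorem occ_eq_stateOcc_mul (π : S → A → ℝ) (s : S) (a : A) :
    M.occ π s a = M.stateOcc π s * π s a := by
  rw [occ, stateOcc, tsum_mul_right, mul_assoc]

theorem stateOcc_nonneg (hπ : ∀ s a, 0 ≤ π s a) (s : S) : 0 ≤ M.stateOcc π s :=
  mul_nonneg (sub_nonneg.2 M.disc_lt_one.le)
    (tsum_nonneg fun t => mul_nonneg (pow_nonneg M.disc_pos.le t) (M.stateDist_nonneg hπ t s))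

theorem sum_stateOcc (hπ : IsPolicy π) : ∑ s, M.stateOcc π s = 1 := by
  have h1γ : 1 - M.disc ≠ 0 := (sub_pos.2 M.disc_lt_one).ne'
  simp only [stateOcc, ← mul_sum]
  rw [← Summable.tsum_finsetSum fun s _ => M.summable_disc_pow_mul_stateDist hπ s]
  simp only [← mul_sum, M.sum_stateDist hπ, mul_one,
    tsum_geometric_of_lt_one M.disc_pos.le M.disc_lt_one, mul_inv_cancel₀ h1γ]

theorem sum_occ (hπ : IsPolicy π) (s : S) : ∑ a, M.occ π s a = M.stateOcc π s := by
  simp only [occ_eq_stateOcc_mul, ← mul_sum, hπ.2, mul_one]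

theorem stateOcc_eq (hπ : IsPolicy π) (s' : S) :
    M.stateOcc π s' = (1 - M.disc) * M.init s'
      + M.disc * ∑ s, ∑ a, M.stateOcc π s * π s a * M.P s a s' := by
  have hsucc : ∀ t, M.disc ^ (t + 1) * M.stateDist π (t + 1) s'
      = ∑ s, ∑ a, M.disc ^ t * M.stateDist π t s * (M.disc * (π s a * M.P s a s')) := by
    intro t
    simp only [stateDist, mul_sum]
    exact sum_congr rfl fun s _ => sum_congr rfl fun a _ => by ring
  have hsum : ∀ s, Summable fun t => M.disc ^ t * M.stateDist π t s :=
    M.summable_disc_pow_mul_stateDist hπ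
  rw [stateOcc, (hsum s').tsum_eq_zero_add, tsum_congr hsucc,
    Summable.tsum_finsetSum fun s _ => summable_sum fun a _ => (hsum s).mul_right _]
  simp only [Summable.tsum_finsetSum fun a _ => (hsum _).mul_right _, tsum_mul_right, stateOcc,
    stateDist, pow_zero, one_mul, mul_add, mul_sum]
  congr 1
  exact sum_congr rfl fun s _ => sum_congr rfl fun a _ => by ring

theorem one_sub_disc_mul_scalarV (hπ : IsPolicy π) {Qρ : S → A → ℝ} (hQρ : M.IsQ ρ Qρ) :
    (1 - M.disc) * M.scalarV ρ Qρ
      = ∑ s, M.stateOcc π s * (vOf ρ Qρ s + ∑ a, π s a * (M.r s a - Qρ s a)) := by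
  have hflow : ∑ s', M.stateOcc π s' * vOf ρ Qρ s' = (1 - M.disc) * M.scalarV ρ Qρ
      + M.disc * ∑ s, ∑ a, M.stateOcc π s * π s a * ∑ s', M.P s a s' * vOf ρ Qρ s' := by
    rw [sum_congr rfl fun s' _ => by rw [M.stateOcc_eq hπ s']]
    simp only [add_mul, sum_add_distrib, scalarV, mul_sum, sum_mul]
    congr 1
    · exact sum_congr rfl fun s _ => by ring
    · rw [sum_comm]
      refine sum_congr rfl fun s _ => ?_
      rw [sum_comm]
      exact sum_congr rfl fun a _ => sum_congr rfl fun s' _ => by ring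
  have hbellman : ∀ s, ∑ a, π s a * (M.r s a - Qρ s a)
      = -(M.disc * ∑ a, π s a * ∑ s', M.P s a s' * vOf ρ Qρ s') := by
    intro s
    rw [mul_sum, ← sum_neg_distrib]
    exact sum_congr rfl fun a _ => by rw [hQρ s a, bellman]; simp only [vOf]; ring
  have hreorder : ∑ s, M.stateOcc π s * (M.disc * ∑ a, π s a * ∑ s', M.P s a s' * vOf ρ Qρ s')
      = M.disc * ∑ s, ∑ a, M.stateOcc π s * π s a * ∑ s', M.P s a s' * vOf ρ Qρ s' := by
    rw [mul_sum]
    refine sum_congr rfl fun s _ => ?_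
    rw [mul_left_comm, mul_sum (Finset.univ : Finset A)]
    simp only [mul_assoc]
  simp only [hbellman, mul_add, sum_add_distrib, hflow, mul_neg, sum_neg_distrib, hreorder]
  exact (add_neg_cancel_right _ _).symm

theorem performance_difference (hπ : IsPolicy π) {Qπ Qρ : S → A → ℝ} (hQπ : M.IsQ π Qπ)
    (hQρ : M.IsQ ρ Qρ) :
    (1 - M.disc) * (M.scalarV π Qπ - M.scalarV ρ Qρ)
      = ∑ s, M.stateOcc π s * ∑ a, (π s a - ρ s a) * Qρ s a := by
  rw [mul_sub, M.one_sub_disc_mul_scalarV hπ hQπ, M.one_sub_disc_mul_scalarV hπ hQρ,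
    ← sum_sub_distrib]
  refine sum_congr rfl fun s _ => ?_
  simp only [vOf, mul_sub, sub_mul, sum_sub_distrib]
  ring

theorem stateOcc_le_mul_of_occ_le_mul (hπ : IsPolicy π) (hρ : IsPolicy ρ)
    (hcov : ∀ s a, M.occ π s a ≤ C * M.occ ρ s a) (s : S) :
    M.stateOcc π s ≤ C * M.stateOcc ρ s := by
  rw [← M.sum_occ hπ, ← M.sum_occ hρ, mul_sum]
  exact sum_le_sum fun a _ => hcov s a

theorem sum_sum_mul_le_sqrt_of_le_mul_occ (hC : 0 ≤ C) {w h : S → A → ℝ} {Δ : ℝ}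
    (hw : ∀ s a, 0 ≤ w s a) (hw1 : ∑ s, ∑ a, w s a = 1)
    (hwρ : ∀ s a, w s a ≤ C * M.occ ρ s a)
    (hΔ : ∑ s, ∑ a, M.occ ρ s a * h s a ^ 2 ≤ Δ) :
    ∑ s, ∑ a, w s a * h s a ≤ √(C * Δ) := by
  rw [← Fintype.sum_prod_type'] at hw1 hΔ ⊢
  exact sum_mul_le_sqrt_of_le_mul univ hC (fun x _ => hw x.1 x.2) hw1.le (fun x _ => hwρ x.1 x.2) hΔ

theorem one_sub_disc_mul_sub_scalarV_le (hπ : IsPolicy π) (hρ : IsPolicy ρ)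
    {Qπ Qρ f : S → A → ℝ} (hQπ : M.IsQ π Qπ) (hQρ : M.IsQ ρ Qρ) {Δ : ℝ} (hC : 0 ≤ C)
    (hcov : ∀ s a, M.occ π s a ≤ C * M.occ ρ s a)
    (hf : ∑ s, ∑ a, M.occ ρ s a * (f s a - Qρ s a) ^ 2 ≤ Δ) :
    (1 - M.disc) * (M.scalarV π Qπ - M.scalarV ρ Qρ)
      ≤ ∑ s, M.stateOcc π s * ∑ a, (π s a - ρ s a) * f s a + 2 * √(C * Δ) := by
  have hsplit : ∀ s, M.stateOcc π s * ∑ a, (π s a - ρ s a) * Qρ s a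
      = M.stateOcc π s * ∑ a, (π s a - ρ s a) * f s a
        + ∑ a, M.occ π s a * (Qρ s a - f s a)
        + ∑ a, M.stateOcc π s * ρ s a * (f s a - Qρ s a) := by
    intro s
    simp only [occ_eq_stateOcc_mul, mul_sum, ← sum_add_distrib]
    exact sum_congr rfl fun a _ => by ring
  have hπerr : ∑ s, ∑ a, M.occ π s a * (Qρ s a - f s a) ≤ √(C * Δ) := by
    refine M.sum_sum_mul_le_sqrt_of_le_mul_occ hC (fun s a => ?_) ?_ hcov ?_
    · rw [occ_eq_stateOcc_mul]; exact mul_nonneg (M.stateOcc_nonneg hπ.1 s) (hπ.1 s a)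
    · simp only [M.sum_occ hπ, M.sum_stateOcc hπ]
    · simpa only [sub_sq_comm] using hf
  have hρerr : ∑ s, ∑ a, M.stateOcc π s * ρ s a * (f s a - Qρ s a) ≤ √(C * Δ) := by
    refine M.sum_sum_mul_le_sqrt_of_le_mul_occ hC
      (fun s a => mul_nonneg (M.stateOcc_nonneg hπ.1 s) (hρ.1 s a)) ?_ (fun s a => ?_) hf
    · simp only [← mul_sum, hρ.2, mul_one, M.sum_stateOcc hπ]
    · rw [occ_eq_stateOcc_mul, ← mul_assoc]
      exact mul_le_mul_of_nonneg_right
        (M.stateOcc_le_mul_of_occ_le_mul hπ hρ hcov s) (hρ.1 s a)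
  rw [M.performance_difference hπ hQπ hQρ, sum_congr rfl fun s _ => hsplit s,
    sum_add_distrib, sum_add_distrib]
  linarith

theorem one_sub_disc_mul_sum_sub_scalarV_le {T : ℕ} {p Q f : ℕ → S → A → ℝ}
    {πe Qe : S → A → ℝ} (hπe : IsPolicy πe) (hQe : M.IsQ πe Qe)
    (hp : ∀ t ∈ Icc 1 T, IsPolicy (p t)) (hQ : ∀ t ∈ Icc 1 T, M.IsQ (p t) (Q t)) {Δ R : ℝ}
    (hC : 0 ≤ C) (hcov : ∀ t ∈ Icc 1 T, ∀ s a, M.occ πe s a ≤ C * M.occ (p t) s a)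
    (hf : ∀ t ∈ Icc 1 T, ∑ s, ∑ a, M.occ (p t) s a * (f t s a - Q t s a) ^ 2 ≤ Δ)
    (hregret : ∀ s, ∑ t ∈ Icc 1 T, ∑ a, (πe s a - p t s a) * f t s a ≤ R) :
    (1 - M.disc) * ∑ t ∈ Icc 1 T, (M.scalarV πe Qe - M.scalarV (p t) (Q t))
      ≤ R + T * (2 * √(C * Δ)) := calc
  _ ≤ ∑ t ∈ Icc 1 T, (∑ s, M.stateOcc πe s * ∑ a, (πe s a - p t s a) * f t s a
        + 2 * √(C * Δ)) := by
      rw [mul_sum]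
      exact sum_le_sum fun t ht =>
        M.one_sub_disc_mul_sub_scalarV_le hπe (hp t ht) hQe (hQ t ht) hC (hcov t ht) (hf t ht)
  _ = ∑ s, M.stateOcc πe s * ∑ t ∈ Icc 1 T, ∑ a, (πe s a - p t s a) * f t s a
        + T * (2 * √(C * Δ)) := by
      simp only [sum_add_distrib, sum_const, Nat.card_Icc, add_tsub_cancel_right, nsmul_eq_mul,
        mul_sum]
      rw [sum_comm]
  _ ≤ ∑ s, M.stateOcc πe s * R + T * (2 * √(C * Δ)) := by
      gcongr with s
      exacts [M.stateOcc_nonneg hπe.1 s, hregret s]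
  _ = R + T * (2 * √(C * Δ)) := by rw [← sum_mul, M.sum_stateOcc hπe, one_mul]

end FinMDP

theorem div_add_mul_eq_two_sqrt {L T κ η : ℝ} (hL : 0 < L) (hT : 0 < T) (hκ : 0 < κ)
    (hη : η = κ * √(L / T)) :
    L / η + η * T * (1 / κ) ^ 2 = 2 * √(L * T) / κ := by
  obtain ⟨x, hx, rfl⟩ : ∃ x, 0 < x ∧ x ^ 2 = L := ⟨√L, Real.sqrt_pos.2 hL, Real.sq_sqrt hL.le⟩
  obtain ⟨y, hy, rfl⟩ : ∃ y, 0 < y ∧ y ^ 2 = T := ⟨√T, Real.sqrt_pos.2 hT, Real.sq_sqrt hT.le⟩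
  rw [← div_pow, Real.sqrt_sq (by positivity), ← mul_pow, Real.sqrt_sq (by positivity)] at *
  subst hη
  field_simp
  ring

/-- Cumulative suboptimality of hybrid actor-critic under NPG coverage
(deterministic form of the no-Bellman-completeness case of Theorem 4.5). -/
theorem stmt16 (M : FinMDP S A) (hA : 2 ≤ Fintype.card A) (T : ℕ)
    (hT : 4 * Real.log (Fintype.card A) ≤ (T : ℝ))
    (η : ℝ) (hη : η = (1 - M.disc) * Real.sqrt (Real.log (Fintype.card A) / T))
    (f : ℕ → S → A → ℝ)
    (hfmem : ∀ t ∈ Finset.Icc 1 T, ∀ s a, f t s a ∈ Set.Icc 0 (1 / (1 - M.disc)))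
    (π : ℕ → S → A → ℝ)
    (hπ1 : ∀ s a, π 1 s a = 1 / Fintype.card A)
    (hupd : ∀ t, 1 ≤ t → t < T → ∀ s a,
      π (t + 1) s a =
        π t s a * Real.exp (η * f t s a) / ∑ a', π t s a' * Real.exp (η * f t s a'))
    (Q : ℕ → S → A → ℝ) (hQ : ∀ t ∈ Finset.Icc 1 T, M.IsQ (π t) (Q t))
    (πe Qe : S → A → ℝ) (hπe : IsPolicy πe) (hQe : M.IsQ πe Qe)
    (Δon C : ℝ) (hC : 0 ≤ C)
    (hon : ∀ t ∈ Finset.Icc 1 T,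
      ∑ s, ∑ a, M.occ (π t) s a * (f t s a - Q t s a) ^ 2 ≤ Δon)
    (hcov : ∀ t ∈ Finset.Icc 1 T, ∀ s a, M.occ πe s a ≤ C * M.occ (π t) s a) :
    ∑ t ∈ Finset.Icc 1 T, (M.scalarV πe Qe - M.scalarV (π t) (Q t))
      ≤ (2 / (1 - M.disc) ^ 2) * Real.sqrt (Real.log (Fintype.card A) * T)
        + (2 * T / (1 - M.disc)) * Real.sqrt (C * Δon) := by
  set L := Real.log (Fintype.card A)
  set B := 1 / (1 - M.disc)
  have h1γ : 0 < 1 - M.disc := sub_pos.2 M.disc_lt_one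
  have hL : 0 < L := Real.log_pos (by exact_mod_cast hA)
  have hT0 : (0 : ℝ) < T := by linarith
  have hη0 : 0 < η := hη ▸ mul_pos h1γ (Real.sqrt_pos.2 (div_pos hL hT0))
  have hηB : η * B ≤ 1 := by
    rw [hη, mul_comm, ← mul_assoc, one_div_mul_cancel h1γ.ne', one_mul, Real.sqrt_le_one]
    exact div_le_one_of_le₀ (by linarith) hT0.le
  have hexp : ∀ s, IsExpWeights η (fun t a => f t s a) T (fun t a => π t s a) :=
    fun s => ⟨hπ1 s, fun t ht1 htT => hupd t ht1 htT s⟩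
  have hπt : ∀ t ∈ Icc 1 T, IsPolicy (π t) :=
    fun t ht => ⟨fun s => ((hexp s).isProb ht).1, fun s => ((hexp s).isProb ht).2⟩
  have hregret : ∀ s, ∑ t ∈ Icc 1 T, ∑ a, (πe s a - π t s a) * f t s a ≤ L / η + η * T * B ^ 2 :=
    fun s => (hexp s).regret_le hη0 hηB
      (fun t ht a => (abs_of_nonneg (hfmem t ht s a).1).trans_le (hfmem t ht s a).2)
      (hπe.1 s) (hπe.2 s)
  have hsum := M.one_sub_disc_mul_sum_sub_scalarV_le hπe hQe hπt hQ hC hcov hon hregret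
  rw [div_add_mul_eq_two_sqrt hL hT0 h1γ hη, ← le_div_iff₀' h1γ] at hsum
  refine hsum.trans_eq ?_
  field_simp
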